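/- Sufficiency of E-KKT conditions under generalized exponential E-invexity: With the same multiobjective setup, suppose (E(ȳ), τ̄, ρ̄, ξ̄) satisfies the E-KKT conditions, each fᵢ is exponentially pseudo-E-invex at ȳ on Ω_E, each active gₖ is exponentially quasi-E-invex at ȳ on Ω_E, each hⱼ with ξ̄ⱼ > 0 is exponentially quasi-E-invex at ȳ, and each −hⱼ with ξ̄ⱼ < 0 is exponentially quasi-E-invex at ȳ (all with respect to the same η). Then E(ȳ) is a weak E-Pareto solution of the problem. -/

import Mathlib

open Real

/-!
Suppose some feasible `E x` improved every objective strictly, and test the E-KKT stationarity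
equation against the direction `v = η (E x) (E ȳ)`. Since `exp` is positive and strictly
increasing, pseudo-invexity makes every `∇fᵢ(E ȳ) v` negative, so the objective part is negative
(`τ̄ ≥ 0`, `τ̄ ≠ 0`). Complementary slackness leaves only active constraints `gₖ(E x) ≤ 0 = gₖ(E ȳ)`,
and feasibility gives `hⱼ(E x) = hⱼ(E ȳ)`, so quasi-invexity makes every constraint term
nonpositive. The stationarity equation then reads `0 < 0`.
-/

section ExponentialInvexity

variable {X : Type*} [NormedAddCommGroup X] [NormedSpace ℝ X]

def ExpPseudoEInvexAt (E : X → X) (η : X → X → X) (S : Set X) (φ : X → ℝ) (y : X) : Prop :=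
  ∀ x ∈ S, exp (φ (E x)) < exp (φ (E y)) →
    fderiv ℝ (fun z => φ (E z)) y (η (E x) (E y)) * exp (φ (E y)) < 0

def ExpQuasiEInvexAt (E : X → X) (η : X → X → X) (S : Set X) (φ : X → ℝ) (y : X) : Prop :=
  ∀ x ∈ S, exp (φ (E x)) ≤ exp (φ (E y)) →
    fderiv ℝ (fun z => φ (E z)) y (η (E x) (E y)) * exp (φ (E y)) ≤ 0

variable {E : X → X} {η : X → X → X} {S : Set X} {φ : X → ℝ} {x y : X}

theorem ExpPseudoEInvexAt.fderiv_neg (hφ : ExpPseudoEInvexAt E η S φ y) (hx : x ∈ S)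
    (hlt : φ (E x) < φ (E y)) : fderiv ℝ (fun z => φ (E z)) y (η (E x) (E y)) < 0 :=
  neg_of_mul_neg_left (hφ x hx (exp_lt_exp.mpr hlt)) (exp_pos _).le

theorem ExpQuasiEInvexAt.fderiv_nonpos (hφ : ExpQuasiEInvexAt E η S φ y) (hx : x ∈ S)
    (hle : φ (E x) ≤ φ (E y)) : fderiv ℝ (fun z => φ (E z)) y (η (E x) (E y)) ≤ 0 :=
  nonpos_of_mul_nonpos_left (hφ x hx (exp_le_exp.mpr hle)) (exp_pos _)

theorem mul_fderiv_nonpos_of_slackness {ρ : ℝ}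
    (hφ : φ (E y) = 0 → ExpQuasiEInvexAt E η S φ y) (hρ : 0 ≤ ρ)
    (hslack : ρ * φ (E y) = 0) (hx : x ∈ S) (hφx : φ (E x) ≤ 0) :
    ρ * fderiv ℝ (fun z => φ (E z)) y (η (E x) (E y)) ≤ 0 := by
  rcases hρ.eq_or_lt with rfl | hρpos
  · simp
  have hactive : φ (E y) = 0 := (mul_eq_zero.mp hslack).resolve_left hρpos.ne'
  exact mul_nonpos_of_nonneg_of_nonpos hρ
    ((hφ hactive).fderiv_nonpos hx (hactive ▸ hφx))

theorem mul_fderiv_nonpos_of_eq {ξ : ℝ}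
    (hpos : 0 < ξ → ExpQuasiEInvexAt E η S φ y)
    (hneg : ξ < 0 → ExpQuasiEInvexAt E η S (fun w => -φ w) y)
    (hx : x ∈ S) (heq : φ (E x) = φ (E y)) :
    ξ * fderiv ℝ (fun z => φ (E z)) y (η (E x) (E y)) ≤ 0 := by
  rcases lt_trichotomy ξ 0 with hξ | rfl | hξ
  · have hnegφ := (hneg hξ).fderiv_nonpos hx (neg_le_neg heq.ge)
    rw [fderiv_fun_neg, neg_apply, neg_nonpos] at hnegφ
    exact mul_nonpos_of_nonpos_of_nonneg hξ.le hnegφ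
  · simp
  · exact mul_nonpos_of_nonneg_of_nonpos hξ.le ((hpos hξ).fderiv_nonpos hx heq.le)

end ExponentialInvexity

theorem Finset.sum_mul_neg_of_nonneg_of_ne_zero {ι : Type*} [Fintype ι] {τ a : ι → ℝ}
    (hτ : ∀ i, 0 ≤ τ i) (hτne : τ ≠ 0) (ha : ∀ i, a i < 0) : ∑ i, τ i * a i < 0 := by
  obtain ⟨i₀, hi₀⟩ : ∃ i₀, τ i₀ ≠ 0 := Function.ne_iff.mp hτne
  simpa using Finset.sum_lt_sum (g := fun _ => (0 : ℝ))
    (fun i _ => mul_nonpos_of_nonneg_of_nonpos (hτ i) (ha i).le)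
    ⟨i₀, Finset.mem_univ _, mul_neg_of_pos_of_neg ((hτ i₀).lt_of_ne' hi₀) (ha i₀)⟩

theorem kkt_combination_ne_zero {ι κ ν V : Type*} [Fintype ι] [Fintype κ] [Fintype ν]
    [AddCommGroup V] [Module ℝ V] [TopologicalSpace V]
    (Df : ι → V →L[ℝ] ℝ) (Dg : κ → V →L[ℝ] ℝ) (Dh : ν → V →L[ℝ] ℝ)
    (τ : ι → ℝ) (ρ : κ → ℝ) (ξ : ν → ℝ) (v : V) (hτ : ∀ i, 0 ≤ τ i) (hτne : τ ≠ 0)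
    (hf : ∀ i, Df i v < 0) (hg : ∀ k, ρ k * Dg k v ≤ 0) (hh : ∀ j, ξ j * Dh j v ≤ 0) :
    (∑ i, τ i • Df i) + (∑ k, ρ k • Dg k) + (∑ j, ξ j • Dh j) ≠ 0 := by
  intro hstat
  have hv := congrArg (fun L : V →L[ℝ] ℝ => L v) hstat
  simp only [add_apply, sum_apply, smul_apply, smul_eq_mul, zero_apply] at hv
  linarith [Finset.sum_mul_neg_of_nonneg_of_ne_zero hτ hτne hf,
    Finset.sum_nonpos fun k (_ : k ∈ Finset.univ) => hg k,
    Finset.sum_nonpos fun j (_ : j ∈ Finset.univ) => hh j]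

theorem EKKT_sufficiency_weak_E_Pareto_generalized_general {n p m q : ℕ}
    (E : (Fin n → ℝ) → (Fin n → ℝ))
    (f : Fin p → (Fin n → ℝ) → ℝ) (g : Fin m → (Fin n → ℝ) → ℝ)
    (h : Fin q → (Fin n → ℝ) → ℝ)
    (η : (Fin n → ℝ) → (Fin n → ℝ) → (Fin n → ℝ))
    (ΩE : Set (Fin n → ℝ))
    (hΩE : ΩE = {x | (∀ k, g k (E x) ≤ 0) ∧ ∀ j, h j (E x) = 0})
    (ybar : Fin n → ℝ) (hfeas : ybar ∈ ΩE)
    (τbar : Fin p → ℝ) (ρbar : Fin m → ℝ) (ξbar : Fin q → ℝ)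
    (hstat : (∑ i, τbar i • fderiv ℝ (fun z => f i (E z)) ybar) +
        (∑ k, ρbar k • fderiv ℝ (fun z => g k (E z)) ybar) +
        (∑ j, ξbar j • fderiv ℝ (fun z => h j (E z)) ybar) = 0)
    (hslack : ∀ k, ρbar k * g k (E ybar) = 0)
    (hτ : ∀ i, 0 ≤ τbar i) (hτne : τbar ≠ 0) (hρ : ∀ k, 0 ≤ ρbar k)
    (hfpseudo : ∀ i, ∀ x ∈ ΩE,
      exp (f i (E x)) < exp (f i (E ybar)) →
        fderiv ℝ (fun z => f i (E z)) ybar (η (E x) (E ybar)) *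
          exp (f i (E ybar)) < 0)
    (hgquasi : ∀ k, g k (E ybar) = 0 → ∀ x ∈ ΩE,
      exp (g k (E x)) ≤ exp (g k (E ybar)) →
        fderiv ℝ (fun z => g k (E z)) ybar (η (E x) (E ybar)) *
          exp (g k (E ybar)) ≤ 0)
    (hhquasi : ∀ j, 0 < ξbar j → ∀ x ∈ ΩE,
      exp (h j (E x)) ≤ exp (h j (E ybar)) →
        fderiv ℝ (fun z => h j (E z)) ybar (η (E x) (E ybar)) *
          exp (h j (E ybar)) ≤ 0)
    (hnhquasi : ∀ j, ξbar j < 0 → ∀ x ∈ ΩE,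
      exp (-h j (E x)) ≤ exp (-h j (E ybar)) →
        fderiv ℝ (fun z => -h j (E z)) ybar (η (E x) (E ybar)) *
          exp (-h j (E ybar)) ≤ 0) :
    ¬ ∃ x ∈ ΩE, ∀ i, f i (E x) < f i (E ybar) := by
  subst hΩE
  rintro ⟨x, hx, hlt⟩
  refine kkt_combination_ne_zero _ _ _ τbar ρbar ξbar (η (E x) (E ybar)) hτ hτne
    (fun i => ?_) (fun k => ?_) (fun j => ?_) hstat
  · exact ExpPseudoEInvexAt.fderiv_neg (hfpseudo i) hx (hlt i)
  · exact mul_fderiv_nonpos_of_slackness (hgquasi k) (hρ k) (hslack k) hx (hx.1 k)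
  · exact mul_fderiv_nonpos_of_eq (hhquasi j) (hnhquasi j) hx
      ((hx.2 j).trans (hfeas.2 j).symm)

theorem EKKT_sufficiency_weak_E_Pareto_generalized {n p m q : ℕ}
    (E : (Fin n → ℝ) → (Fin n → ℝ))
    (f : Fin p → (Fin n → ℝ) → ℝ) (g : Fin m → (Fin n → ℝ) → ℝ)
    (h : Fin q → (Fin n → ℝ) → ℝ)
    (η : (Fin n → ℝ) → (Fin n → ℝ) → (Fin n → ℝ))
    (hE : Function.Bijective E)
    (ΩE : Set (Fin n → ℝ))
    (hΩE : ΩE = {x | (∀ k, g k (E x) ≤ 0) ∧ ∀ j, h j (E x) = 0})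
    (ybar : Fin n → ℝ) (hfeas : ybar ∈ ΩE)
    (τbar : Fin p → ℝ) (ρbar : Fin m → ℝ) (ξbar : Fin q → ℝ)
    (hdf : ∀ i, DifferentiableAt ℝ (fun z => f i (E z)) ybar)
    (hdg : ∀ k, DifferentiableAt ℝ (fun z => g k (E z)) ybar)
    (hdh : ∀ j, DifferentiableAt ℝ (fun z => h j (E z)) ybar)
    (hstat : (∑ i, τbar i • fderiv ℝ (fun z => f i (E z)) ybar) +
        (∑ k, ρbar k • fderiv ℝ (fun z => g k (E z)) ybar) +
        (∑ j, ξbar j • fderiv ℝ (fun z => h j (E z)) ybar) = 0)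
    (hslack : ∀ k, ρbar k * g k (E ybar) = 0)
    (hτ : ∀ i, 0 ≤ τbar i) (hτne : τbar ≠ 0) (hρ : ∀ k, 0 ≤ ρbar k)
    (hfpseudo : ∀ i, ∀ x ∈ ΩE,
      exp (f i (E x)) < exp (f i (E ybar)) →
        fderiv ℝ (fun z => f i (E z)) ybar (η (E x) (E ybar)) *
          exp (f i (E ybar)) < 0)
    (hgquasi : ∀ k, g k (E ybar) = 0 → ∀ x ∈ ΩE,
      exp (g k (E x)) ≤ exp (g k (E ybar)) →
        fderiv ℝ (fun z => g k (E z)) ybar (η (E x) (E ybar)) *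
          exp (g k (E ybar)) ≤ 0)
    (hhquasi : ∀ j, 0 < ξbar j → ∀ x ∈ ΩE,
      exp (h j (E x)) ≤ exp (h j (E ybar)) →
        fderiv ℝ (fun z => h j (E z)) ybar (η (E x) (E ybar)) *
          exp (h j (E ybar)) ≤ 0)
    (hnhquasi : ∀ j, ξbar j < 0 → ∀ x ∈ ΩE,
      exp (-h j (E x)) ≤ exp (-h j (E ybar)) →
        fderiv ℝ (fun z => -h j (E z)) ybar (η (E x) (E ybar)) *
          exp (-h j (E ybar)) ≤ 0) :
    ¬ ∃ x ∈ ΩE, ∀ i, f i (E x) < f i (E ybar) :=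
  EKKT_sufficiency_weak_E_Pareto_generalized_general E f g h η ΩE hΩE ybar hfeas τbar ρbar ξbar
    hstat hslack hτ hτne hρ hfpseudo hgquasi hhquasi hnhquasi
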